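/- arXiv:0807.0678 — 4 statements merged into one kernel-verified Lean document; each statement's English description precedes it below -/
import Mathlib

section
/- If P(x,y) = P(−x−y, y) for all x,y, then the involution r(x,y,z) = (−x, y−z, −z) is a reversor for the map f(x,y,z)=(x+y, y+z−ε+μy+P(x,y), z−ε+μy+P(x,y)): that is, r∘f = f⁻¹∘r, equivalently f∘r∘f = r. Moreover r∘r = id. -/
/-- The normal-form map with an arbitrary nonlinearity `P : ℝ² → ℝ`. -/
def normalFormMap (P : ℝ → ℝ → ℝ) (ε μ : ℝ) : ℝ × ℝ × ℝ → ℝ × ℝ × ℝ :=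
  fun p =>
    (p.1 + p.2.1,
     p.2.1 + p.2.2 - ε + μ * p.2.1 + P p.1 p.2.1,
     p.2.2 - ε + μ * p.2.1 + P p.1 p.2.1)

/-- The inverse of the normal-form map. -/
def normalFormInv (P : ℝ → ℝ → ℝ) (ε μ : ℝ) : ℝ × ℝ × ℝ → ℝ × ℝ × ℝ :=
  fun p =>
    (p.1 - p.2.1 + p.2.2,
     p.2.1 - p.2.2,
     p.2.2 + ε - μ * (p.2.1 - p.2.2) - P (p.1 - p.2.1 + p.2.2) (p.2.1 - p.2.2))

/-- The involution `r(x,y,z) = (−x, y−z, −z)`. -/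
def reversor : ℝ × ℝ × ℝ → ℝ × ℝ × ℝ :=
  fun p => (-p.1, p.2.1 - p.2.2, -p.2.2)

/-- If `P(x,y) = P(−x−y, y)` for all `x, y`, then `r` is a reversor for `f`:
`r ∘ f = f⁻¹ ∘ r`, equivalently `f ∘ r ∘ f = r`; moreover `r ∘ r = id`. -/
theorem reversor_reverses (P : ℝ → ℝ → ℝ) (ε μ : ℝ)
    (hP : ∀ x y : ℝ, P x y = P (-x - y) y) :
    (∀ ξ : ℝ × ℝ × ℝ, reversor (normalFormMap P ε μ ξ) = normalFormInv P ε μ (reversor ξ)) ∧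
    (∀ ξ : ℝ × ℝ × ℝ, normalFormMap P ε μ (reversor (normalFormMap P ε μ ξ)) = reversor ξ) ∧
    reversor ∘ reversor = id := by
  refine ⟨?_, ?_, ?_⟩
  · rintro ⟨x, y, z⟩
    simp only [normalFormMap, normalFormInv, reversor, Prod.mk.injEq]
    refine ⟨by ring, by ring, ?_⟩
    have h1 : -x - (y - z) + -z = -x - y := by ring
    have h2 : y - z - -z = y := by ring
    rw [h1, h2, ← hP]; ring
  · rintro ⟨x, y, z⟩
    simp only [normalFormMap, reversor, Prod.mk.injEq]
    have h : P (-(x + y)) (y + z - ε + μ * y + P x y - (z - ε + μ * y + P x y)) = P x y := by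
      have : y + z - ε + μ * y + P x y - (z - ε + μ * y + P x y) = y := by ring
      rw [this, hP x y]
      congr 1; ring
    rw [h]
    refine ⟨by ring, by ring, by ring⟩
  · funext p
    simp [reversor]
end

section
/- Under the hypotheses of the previous setup (single resonance m·ω = n, gcd(m₁,m₂,n)=1, k=gcd(m₁,m₂)), the closure of any orbit of the translation x ↦ x+ω on T² is a disjoint union of exactly k circles (cosets of a one-dimensional subtorus), and the translation permutes these k circles cyclically. -/
/-!
Write `(m₁, m₂) = k (a, b)` with `a, b` coprime, say `u a + v b = 1`, and let `H` be the kernel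
of the character `z ↦ a z₁ + b z₂` of `T²`; it is a circle, with coordinate `-v z₁ + u z₂`.
The character sends `ω` to `n / k`, of order exactly `k` since `gcd(n, k) = 1`, so `j • ω ∈ H`
iff `k ∣ j`: the `k` cosets `x + i • ω + H` are distinct, cyclically permuted by `ω`, and cover
the orbit. Conversely, in the coordinate of `H` the point `k • ω` is `k (-v ω₁ + u ω₂)`, which is
irrational because the resonance module has rank one; hence the multiples of `k • ω` are dense
in `H`, and the orbit closure fills every coset.
-/

open Set

section LinearForm

variable {G : Type*} [AddCommGroup G]

def linearForm (a b : ℤ) : G × G →+ G := (zsmulAddGroupHom a).coprod (zsmulAddGroupHom b)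

@[simp]
lemma linearForm_apply (a b : ℤ) (z : G × G) : linearForm a b z = a • z.1 + b • z.2 := rfl

variable [TopologicalSpace G] [IsTopologicalAddGroup G]

lemma continuous_linearForm (a b : ℤ) : Continuous (linearForm (G := G) a b) := by
  show Continuous fun z : G × G => a • z.1 + b • z.2
  fun_prop

lemma isClosed_ker_linearForm [T2Space G] (a b : ℤ) :
    IsClosed ((linearForm (G := G) a b).ker : Set (G × G)) :=
  isClosed_singleton.preimage (continuous_linearForm a b)

def kerLinearFormEquiv {a b u v : ℤ} (h : u * a + v * b = 1) :
    (linearForm (G := G) a b).ker ≃ₜ+ G where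
  toFun z := linearForm (-v) u z
  invFun t := ⟨((-b) • t, a • t), by
    rw [AddMonoidHom.mem_ker, linearForm_apply, smul_smul, smul_smul, ← add_smul, mul_neg,
      mul_comm, neg_add_cancel, zero_smul]⟩
  left_inv z := by
    obtain ⟨⟨z₁, z₂⟩, hz⟩ := z
    replace hz : a • z₁ + b • z₂ = 0 := hz
    ext
    all_goals dsimp only [linearForm_apply]
    · linear_combination (norm := module) (-u) • hz + h • z₁
    · linear_combination (norm := module) (-v) • hz + h • z₂
  right_inv t := by
    simp only [linearForm_apply]
    linear_combination (norm := module) h • t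
  map_add' x y := map_add (linearForm (-v) u) (x : G × G) y
  continuous_toFun := (continuous_linearForm _ _).comp continuous_subtype_val
  continuous_invFun := by fun_prop

lemma kerLinearFormEquiv_apply {a b u v : ℤ} (h : u * a + v * b = 1)
    (z : (linearForm (G := G) a b).ker) : kerLinearFormEquiv h z = linearForm (-v) u z :=
  rfl

end LinearForm

section OrbitClosure

variable {G : Type*} [AddCommGroup G] {H : AddSubgroup G} {k : ℕ} {ω : G}

lemma zsmul_mem_of_nsmul_mem (hk : k • ω ∈ H) {j : ℤ} (hj : (k : ℤ) ∣ j) : j • ω ∈ H := by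
  obtain ⟨m, rfl⟩ := hj
  rw [mul_comm, mul_zsmul, natCast_zsmul]
  exact H.zsmul_mem hk m

lemma nsmul_sub_val_natCast_mem [NeZero k] (hk : k • ω ∈ H) (j : ℕ) :
    j • ω - (j : ZMod k).val • ω ∈ H := by
  rw [ZMod.val_natCast]
  nth_rw 1 [← Nat.mod_add_div j k]
  rw [add_nsmul, add_sub_cancel_left, mul_nsmul]
  exact H.nsmul_mem hk _

lemma add_val_succ_sub_mem [NeZero k] (hk : k • ω ∈ H) (x : G) (i : ZMod k) :
    x + i.val • ω + ω - (x + (i + 1).val • ω) ∈ H := by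
  have hdvd : (k : ℤ) ∣ (i.val + 1 - (i + 1).val : ℤ) := by
    rw [← ZMod.intCast_zmod_eq_zero_iff_dvd]
    push_cast
    simp
  convert zsmul_mem_of_nsmul_mem hk hdvd using 1
  rw [sub_zsmul, add_zsmul, one_zsmul, natCast_zsmul, natCast_zsmul]
  abel

lemma pairwise_disjoint_cosets [NeZero k] (hk : ∀ j : ℤ, j • ω ∈ H → (k : ℤ) ∣ j) (x : G) :
    Pairwise fun i j : ZMod k => Disjoint ((fun t => x + i.val • ω + t) '' (H : Set G))
      ((fun t => x + j.val • ω + t) '' (H : Set G)) := by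
  intro i j hij
  refine Set.disjoint_left.2 ?_
  rintro _ ⟨s, hs, rfl⟩ ⟨t, ht, hst⟩
  have hmem : ((i.val : ℤ) - j.val) • ω ∈ H := by
    convert H.sub_mem ht hs using 1
    rw [sub_zsmul, natCast_zsmul, natCast_zsmul]
    dsimp only at hst
    linear_combination (norm := abel) -hst
  apply hij
  have := (ZMod.intCast_zmod_eq_zero_iff_dvd _ k).2 (hk _ hmem)
  simpa [sub_eq_zero] using this

variable [TopologicalSpace G] [IsTopologicalAddGroup G]

lemma closure_range_add_nsmul_eq_iUnion [NeZero k] (hH : IsClosed (H : Set G)) (hk : k • ω ∈ H)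
    (hdense : (H : Set G) ⊆ closure (range fun j : ℕ => j • ω)) (x : G) :
    closure (range fun j : ℕ => x + j • ω) =
      ⋃ i : ZMod k, (fun t => x + i.val • ω + t) '' (H : Set G) := by
  refine subset_antisymm (closure_minimal ?_ ?_) (iUnion_subset fun i => ?_)
  · rintro _ ⟨j, rfl⟩
    refine mem_iUnion.2 ⟨j, _, nsmul_sub_val_natCast_mem hk j, ?_⟩
    dsimp only
    abel
  · exact isClosed_iUnion_of_finite fun i => (Homeomorph.addLeft _).isClosedMap _ hH
  · rintro _ ⟨t, ht, rfl⟩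
    refine map_mem_closure (continuous_const_add (x + i.val • ω)) (hdense ht) ?_
    rintro _ ⟨j, rfl⟩
    exact ⟨i.val + j, by dsimp only; rw [add_nsmul]; abel⟩

end OrbitClosure

lemma coe_subset_closure_range_nsmul {G T : Type*} [AddGroup G] [TopologicalSpace G]
    [AddGroup T] [TopologicalSpace T] {H : AddSubgroup G} (e : H ≃ₜ+ T) (h : H)
    (hd : DenseRange fun s : ℕ => s • e h) :
    (H : Set G) ⊆ closure (range fun s : ℕ => s • (h : G)) := by
  intro y hy
  have hcont : Continuous fun t => (e.symm t : G) := continuous_subtype_val.comp e.symm.continuous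
  have hmaps : MapsTo (fun t => (e.symm t : G)) (range fun s : ℕ => s • e h)
      (range fun s : ℕ => s • (h : G)) := by
    rintro _ ⟨s, rfl⟩
    exact ⟨s, by simp⟩
  obtain ⟨t, ht⟩ := e.symm.surjective ⟨y, hy⟩
  rw [← Subtype.coe_mk y hy, ← ht]
  exact map_mem_closure (f := fun t => (e.symm t : G)) hcont (hd.closure_range ▸ mem_univ t) hmaps

lemma irrational_of_resonances_dvd {ω₁ ω₂ : ℝ} {m₁ m₂ n : ℤ}
    (hrank : ∀ m₁' m₂' n' : ℤ, (m₁' : ℝ) * ω₁ + (m₂' : ℝ) * ω₂ = (n' : ℝ) →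
      ∃ l : ℤ, m₁' = l * m₁ ∧ m₂' = l * m₂ ∧ n' = l * n)
    {p q : ℤ} (hpq : p * m₂ ≠ q * m₁) : Irrational (p * ω₁ + q * ω₂) := by
  rintro ⟨r, hr⟩
  obtain ⟨l, h₁, h₂, -⟩ := hrank (r.den * p) (r.den * q) r.num (by
    push_cast
    rw [mul_assoc, mul_assoc, ← mul_add, ← hr, Rat.cast_def]
    field_simp)
  have hden : (r.den : ℤ) * (p * m₂ - q * m₁) = 0 := by linear_combination m₂ * h₁ - m₁ * h₂
  exact hpq (sub_eq_zero.1 ((mul_eq_zero.1 hden).resolve_left (by exact_mod_cast r.den_nz)))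

lemma gcd_ne_zero_of_resonance {ω₁ ω₂ : ℝ} {m₁ m₂ n : ℤ}
    (hres : (m₁ : ℝ) * ω₁ + (m₂ : ℝ) * ω₂ = (n : ℝ)) (hgcd : Int.gcd (Int.gcd m₁ m₂) n = 1) :
    Int.gcd m₁ m₂ ≠ 0 := by
  intro h
  obtain ⟨rfl, rfl⟩ := Int.gcd_eq_zero_iff.1 h
  obtain rfl : n = 0 := by exact_mod_cast (by simpa using hres : (0 : ℝ) = n).symm
  simp at hgcd

lemma AddCircle.linearForm_coe {p : ℝ} (a b : ℤ) (r₁ r₂ : ℝ) :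
    linearForm a b ((r₁ : AddCircle p), (r₂ : AddCircle p)) =
      ((a * r₁ + b * r₂ : ℝ) : AddCircle p) := by
  rw [linearForm_apply, AddCircle.coe_add, ← zsmul_eq_mul, ← zsmul_eq_mul, AddCircle.coe_zsmul,
    AddCircle.coe_zsmul]

local notation "𝕋" => AddCircle (1 : ℝ)

section Torus

variable {ω₁ ω₂ : ℝ} {a b : ℤ} {k : ℕ}

lemma zsmul_mem_ker_linearForm_iff {n : ℤ} (hk : 0 < k) (hkn : n.natAbs.gcd k = 1)
    (hω : a * ω₁ + b * ω₂ = n / k) (j : ℤ) :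
    j • ((ω₁ : 𝕋), (ω₂ : 𝕋)) ∈ (linearForm a b).ker ↔ (k : ℤ) ∣ j := by
  rw [AddMonoidHom.mem_ker, map_zsmul, AddCircle.linearForm_coe, hω, ← mul_one ((n : ℝ) / k),
    ← addOrderOf_dvd_iff_zsmul_eq_zero, AddCircle.addOrderOf_div_of_gcd_eq_one' hk hkn]

lemma ker_linearForm_subset_closure_range_nsmul {u v : ℤ} (h : u * a + v * b = 1)
    (hk : k • ((ω₁ : 𝕋), (ω₂ : 𝕋)) ∈ (linearForm a b).ker)
    (hirr : Irrational (k * (-v * ω₁ + u * ω₂))) :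
    ((linearForm (G := 𝕋) a b).ker : Set (𝕋 × 𝕋)) ⊆
      closure (range fun j : ℕ => j • ((ω₁ : 𝕋), (ω₂ : 𝕋))) := by
  refine (coe_subset_closure_range_nsmul (kerLinearFormEquiv h) ⟨_, hk⟩ ?_).trans
    (closure_mono ?_)
  · have : kerLinearFormEquiv h ⟨_, hk⟩ = ((k * (-v * ω₁ + u * ω₂) : ℝ) : 𝕋) := by
      rw [kerLinearFormEquiv_apply, map_nsmul, AddCircle.linearForm_coe, ← AddCircle.coe_nsmul,
        nsmul_eq_mul]
      congr 1
      push_cast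
      ring
    rw [this, ← denseRange_zsmul_iff_nsmul, AddCircle.denseRange_zsmul_coe_iff, div_one]
    exact hirr
  · rintro _ ⟨s, rfl⟩
    exact ⟨s * k, mul_nsmul' ..⟩

end Torus

/-- Under a single resonance `m₁ω₁ + m₂ω₂ = n` (`gcd(m₁,m₂,n) = 1`, `k = gcd(m₁,m₂)`),
the closure of any orbit of the translation `x ↦ x + ω` on `T² = ℝ²/ℤ²` is a disjoint
union of exactly `k` circles (cosets of a closed one-dimensional subtorus), and the
translation permutes these `k` circles cyclically. -/
theorem single_resonance_orbit_closure (ω₁ ω₂ : ℝ) (m₁ m₂ n : ℤ) (k : ℕ)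
    (hres : (m₁ : ℝ) * ω₁ + (m₂ : ℝ) * ω₂ = (n : ℝ))
    (hgcd : Int.gcd (Int.gcd m₁ m₂) n = 1)
    (hk : k = Int.gcd m₁ m₂)
    (hrank : ∀ m₁' m₂' n' : ℤ, (m₁' : ℝ) * ω₁ + (m₂' : ℝ) * ω₂ = (n' : ℝ) →
      ∃ l : ℤ, m₁' = l * m₁ ∧ m₂' = l * m₂ ∧ n' = l * n)
    (x : AddCircle (1 : ℝ) × AddCircle (1 : ℝ)) :
    ∃ (H : AddSubgroup (AddCircle (1 : ℝ) × AddCircle (1 : ℝ)))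
      (e : H ≃ₜ AddCircle (1 : ℝ))
      (c : ZMod k → AddCircle (1 : ℝ) × AddCircle (1 : ℝ)),
      IsClosed (H : Set (AddCircle (1 : ℝ) × AddCircle (1 : ℝ))) ∧
      (∀ a b : H, e (a + b) = e a + e b) ∧
      (Pairwise fun i j : ZMod k =>
        Disjoint ((fun t => c i + t) '' (H : Set (AddCircle (1 : ℝ) × AddCircle (1 : ℝ))))
          ((fun t => c j + t) '' (H : Set (AddCircle (1 : ℝ) × AddCircle (1 : ℝ))))) ∧
      (closure (Set.range fun j : ℕ =>
          x + j • ((ω₁ : AddCircle (1 : ℝ)), (ω₂ : AddCircle (1 : ℝ)))) =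
        ⋃ i : ZMod k,
          (fun t => c i + t) '' (H : Set (AddCircle (1 : ℝ) × AddCircle (1 : ℝ)))) ∧
      (∀ i : ZMod k,
        c i + ((ω₁ : AddCircle (1 : ℝ)), (ω₂ : AddCircle (1 : ℝ))) - c (i + 1) ∈ H) := by
  have hk0 : k ≠ 0 := hk ▸ gcd_ne_zero_of_resonance hres hgcd
  have : NeZero k := ⟨hk0⟩
  obtain ⟨a, b, hab, ha, hb⟩ := Int.exists_gcd_one (hk ▸ Nat.pos_of_ne_zero hk0)
  rw [← hk] at ha hb hgcd
  obtain ⟨u, v, huv⟩ := Int.isCoprime_iff_gcd_eq_one.2 hab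
  have hω : a * ω₁ + b * ω₂ = n / k := by
    rw [eq_div_iff (by exact_mod_cast hk0), ← hres, ha, hb]
    push_cast
    ring
  have hmem := zsmul_mem_ker_linearForm_iff (Nat.pos_of_ne_zero hk0)
    (by rwa [Int.gcd_comm] at hgcd) hω
  have hkω : k • ((ω₁ : 𝕋), (ω₂ : 𝕋)) ∈ (linearForm a b).ker := by
    simpa using (hmem k).2 dvd_rfl
  have hirr : Irrational (k * (-v * ω₁ + u * ω₂)) := by
    have hpq : -v * m₂ ≠ u * m₁ := by
      rw [ha, hb]
      intro h
      have : (k : ℤ) * (u * a + v * b) = 0 := by linear_combination -h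
      rw [huv, mul_one] at this
      exact hk0 (by exact_mod_cast this)
    simpa using (irrational_of_resonances_dvd hrank hpq).natCast_mul hk0
  exact ⟨_, (kerLinearFormEquiv huv).toHomeomorph, fun i => x + i.val • ((ω₁ : 𝕋), (ω₂ : 𝕋)),
    isClosed_ker_linearForm a b, map_add (kerLinearFormEquiv huv),
    pairwise_disjoint_cosets (fun j => (hmem j).1) x,
    closure_range_add_nsmul_eq_iUnion (isClosed_ker_linearForm a b) hkω
      (ker_linearForm_subset_closure_range_nsmul huv hkω hirr) x,
    add_val_succ_sub_mem hkω x⟩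
end

section
/- The period-two orbits of the quadratic map f(x,y,z)=(x+y, y+z−ε+μy+P(x,y), z−ε+μy+P(x,y)), P(x,y)=ax²+bxy+cy², with a≠b, are exactly the orbits {(x,y,z),(x+y,−y,−z)} where (x,y,z) = ((μ+4∓ρ)/(a−b), ±2ρ/(a−b), ±4ρ/(a−b)) and ρ² = ((a−b)²ε − a(μ+4)²)/(a−2b+4c), provided the right-hand side is positive; in particular f has at most one period-two orbit (up to the two points on it). -/
/-!
If `f² ξ = ξ` for `ξ = (x, y, z)`, comparing coordinates forces `z = 2y`, and then `f` acts on
`ξ` as the involution `(x, y, z) ↦ (x + y, -y, -z)`; this happens exactly when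
`Q(x, y) = ε` and `Q(x + y, -y) = ε`, where `Q(x, y) = P(x, y) + (μ + 4) y`.
The difference of these two equations is `y ((a - b)(2x + y) - 2(μ + 4))`, and `y ≠ 0` since
`ξ` is not fixed, so `ξ = ((μ + 4 - r)/(a - b), 2r/(a - b), 4r/(a - b))` with `r = (a - b) y / 2`.
Substituting back, `(a - b)² Q = a(μ + 4)² + (a - 2b + 4c) r²`, so `Q = ε` says precisely
`r² = ρ²`.
-/

/-- The quadratic normal-form map. -/
def henonMap (a b c ε μ : ℝ) : ℝ × ℝ × ℝ → ℝ × ℝ × ℝ :=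
  fun p =>
    (p.1 + p.2.1,
     p.2.1 + p.2.2 - ε + μ * p.2.1 + (a * p.1 ^ 2 + b * p.1 * p.2.1 + c * p.2.1 ^ 2),
     p.2.2 - ε + μ * p.2.1 + (a * p.1 ^ 2 + b * p.1 * p.2.1 + c * p.2.1 ^ 2))

variable (a b c ε μ : ℝ)

def henonLevel (x y : ℝ) : ℝ :=
  a * x ^ 2 + b * x * y + c * y ^ 2 + (μ + 4) * y

noncomputable def periodTwoPoint (r : ℝ) : ℝ × ℝ × ℝ :=
  ((μ + 4 - r) / (a - b), 2 * r / (a - b), 4 * r / (a - b))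

variable {a b c ε μ}

lemma henonMap_of_henonLevel_eq {x y z : ℝ} (hz : z = 2 * y)
    (h : henonLevel a b c μ x y = ε) :
    henonMap a b c ε μ (x, y, z) = (x + y, -y, -z) := by
  unfold henonLevel at h
  simp only [henonMap, Prod.mk.injEq]
  exact ⟨trivial, by linear_combination h + hz, by linear_combination h + 2 * hz⟩

lemma henonLevel_eq_of_henonMap_henonMap_eq {x y z : ℝ}
    (h : henonMap a b c ε μ (henonMap a b c ε μ (x, y, z)) = (x, y, z)) :
    z = 2 * y ∧ henonLevel a b c μ x y = ε ∧ henonLevel a b c μ (x + y) (-y) = ε := by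
  obtain ⟨⟨u, v, w⟩, hξ⟩ : ∃ p, henonMap a b c ε μ (x, y, z) = p := ⟨_, rfl⟩
  rw [hξ] at h
  simp only [henonMap, Prod.mk.injEq] at hξ h
  obtain ⟨rfl, hv, hw⟩ := hξ
  obtain ⟨h₁, h₂, h₃⟩ := h
  obtain rfl : v = -y := by linear_combination h₁
  unfold henonLevel
  exact ⟨by linear_combination h₂ - h₃, by linear_combination hv - h₂ + h₃,
    by linear_combination h₂ - hv + hw⟩

lemma henonLevel_periodTwoPoint (hab : a ≠ b) (r : ℝ) :
    (a - b) ^ 2 * henonLevel a b c μ ((μ + 4 - r) / (a - b)) (2 * r / (a - b)) =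
      a * (μ + 4) ^ 2 + (a - 2 * b + 4 * c) * r ^ 2 := by
  have hab' : a - b ≠ 0 := sub_ne_zero.mpr hab
  unfold henonLevel
  field_simp
  ring

lemma henonMap_periodTwoPoint (hab : a ≠ b) {r : ℝ}
    (hr : (a - 2 * b + 4 * c) * r ^ 2 = (a - b) ^ 2 * ε - a * (μ + 4) ^ 2) :
    henonMap a b c ε μ (periodTwoPoint a b μ r) = periodTwoPoint a b μ (-r) := by
  have hab' : a - b ≠ 0 := sub_ne_zero.mpr hab
  have hlevel : henonLevel a b c μ ((μ + 4 - r) / (a - b)) (2 * r / (a - b)) = ε := by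
    apply mul_left_cancel₀ (pow_ne_zero 2 hab')
    rw [henonLevel_periodTwoPoint hab]
    linear_combination hr
  rw [periodTwoPoint, henonMap_of_henonLevel_eq (by ring) hlevel, periodTwoPoint]
  simp only [Prod.mk.injEq]
  exact ⟨by ring, by ring, by ring⟩

lemma periodTwoPoint_neg_ne (hab : a ≠ b) {r : ℝ} (hr : r ≠ 0) :
    periodTwoPoint a b μ (-r) ≠ periodTwoPoint a b μ r := by
  have hab' : a - b ≠ 0 := sub_ne_zero.mpr hab
  intro h
  have hy := congrArg (fun p : ℝ × ℝ × ℝ => p.2.1) h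
  simp only [periodTwoPoint, div_left_inj' hab'] at hy
  exact hr (by linarith)

theorem henonMap_isPeriodTwo_iff (hab : a ≠ b) (ξ : ℝ × ℝ × ℝ) :
    (henonMap a b c ε μ (henonMap a b c ε μ ξ) = ξ ∧ henonMap a b c ε μ ξ ≠ ξ) ↔
      ∃ r ≠ 0, (a - 2 * b + 4 * c) * r ^ 2 = (a - b) ^ 2 * ε - a * (μ + 4) ^ 2 ∧
        ξ = periodTwoPoint a b μ r := by
  have hab' : a - b ≠ 0 := sub_ne_zero.mpr hab
  constructor
  · obtain ⟨x, y, z⟩ := ξ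
    rintro ⟨hperiod, hne⟩
    obtain ⟨hz, h₁, h₂⟩ := henonLevel_eq_of_henonMap_henonMap_eq hperiod
    have hy : y ≠ 0 := by
      rintro rfl
      apply hne
      rw [henonMap_of_henonLevel_eq hz h₁, hz]
      simp
    have hx : (a - b) * (2 * x + y) = 2 * (μ + 4) := by
      apply mul_left_cancel₀ hy
      unfold henonLevel at h₁ h₂
      linear_combination h₂ - h₁
    obtain ⟨r, rfl⟩ : ∃ r, y = 2 * r / (a - b) := ⟨(a - b) * y / 2, by field_simp⟩
    obtain rfl : x = (μ + 4 - r) / (a - b) := by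
      field_simp at hx ⊢
      linear_combination hx
    subst hz
    refine ⟨r, fun hr => hy (by simp [hr]), ?_, ?_⟩
    · linear_combination (a - b) ^ 2 * h₁ - henonLevel_periodTwoPoint (c := c) hab r
    · simp only [periodTwoPoint, Prod.mk.injEq]
      exact ⟨trivial, trivial, by ring⟩
  · rintro ⟨r, hr0, hr, rfl⟩
    have hr' : (a - 2 * b + 4 * c) * (-r) ^ 2 = (a - b) ^ 2 * ε - a * (μ + 4) ^ 2 := by
      rwa [neg_sq]
    refine ⟨?_, ?_⟩
    · rw [henonMap_periodTwoPoint hab hr, henonMap_periodTwoPoint hab hr', neg_neg]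
    · rw [henonMap_periodTwoPoint hab hr]
      exact periodTwoPoint_neg_ne hab hr0

/-- When `a ≠ b` and `ρ² = ((a−b)²ε − a(μ+4)²)/(a−2b+4c) > 0`, the period-two points of
`f` are exactly the two points `((μ+4∓ρ)/(a−b), ±2ρ/(a−b), ±4ρ/(a−b))`, which are
exchanged by `f`; in particular `f` has at most one period-two orbit. -/
theorem henonMap_period_two_orbit (a b c ε μ ρ : ℝ) (hab : a ≠ b)
    (hden : a - 2 * b + 4 * c ≠ 0)
    (hpos : 0 < ((a - b) ^ 2 * ε - a * (μ + 4) ^ 2) / (a - 2 * b + 4 * c))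
    (hρ : ρ = Real.sqrt (((a - b) ^ 2 * ε - a * (μ + 4) ^ 2) / (a - 2 * b + 4 * c))) :
    henonMap a b c ε μ ((μ + 4 - ρ) / (a - b), 2 * ρ / (a - b), 4 * ρ / (a - b)) =
      ((μ + 4 + ρ) / (a - b), -(2 * ρ) / (a - b), -(4 * ρ) / (a - b)) ∧
    henonMap a b c ε μ ((μ + 4 + ρ) / (a - b), -(2 * ρ) / (a - b), -(4 * ρ) / (a - b)) =
      ((μ + 4 - ρ) / (a - b), 2 * ρ / (a - b), 4 * ρ / (a - b)) ∧
    (∀ ξ : ℝ × ℝ × ℝ,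
      (henonMap a b c ε μ (henonMap a b c ε μ ξ) = ξ ∧ henonMap a b c ε μ ξ ≠ ξ) ↔
        (ξ = ((μ + 4 - ρ) / (a - b), 2 * ρ / (a - b), 4 * ρ / (a - b)) ∨
         ξ = ((μ + 4 + ρ) / (a - b), -(2 * ρ) / (a - b), -(4 * ρ) / (a - b)))) := by
  have hρ₀ : ρ ≠ 0 := by rw [hρ]; exact (Real.sqrt_pos.mpr hpos).ne'
  have hρsq : (a - 2 * b + 4 * c) * ρ ^ 2 = (a - b) ^ 2 * ε - a * (μ + 4) ^ 2 := by
    rw [hρ, Real.sq_sqrt hpos.le, mul_div_cancel₀ _ hden]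
  have hρsq' : (a - 2 * b + 4 * c) * (-ρ) ^ 2 = (a - b) ^ 2 * ε - a * (μ + 4) ^ 2 := by
    rwa [neg_sq]
  have hplus : ((μ + 4 + ρ) / (a - b), -(2 * ρ) / (a - b), -(4 * ρ) / (a - b)) =
      periodTwoPoint a b μ (-ρ) := by
    simp only [periodTwoPoint, sub_neg_eq_add, mul_neg]
  have hminus : ((μ + 4 - ρ) / (a - b), 2 * ρ / (a - b), 4 * ρ / (a - b)) =
      periodTwoPoint a b μ ρ := rfl
  rw [hminus, hplus]
  refine ⟨henonMap_periodTwoPoint hab hρsq, ?_, fun ξ => ?_⟩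
  · rw [henonMap_periodTwoPoint hab hρsq', neg_neg]
  rw [henonMap_isPeriodTwo_iff hab]
  constructor
  · rintro ⟨r, -, hr, rfl⟩
    have hrρ : r ^ 2 = ρ ^ 2 := mul_left_cancel₀ hden (hr.trans hρsq.symm)
    rcases sq_eq_sq_iff_eq_or_eq_neg.mp hrρ with rfl | rfl
    exacts [Or.inl rfl, Or.inr rfl]
  · rintro (rfl | rfl)
    exacts [⟨ρ, hρ₀, hρsq, rfl⟩, ⟨-ρ, neg_ne_zero.mpr hρ₀, hρsq', rfl⟩]
end

section
/- Any point of period two of f that is not a fixed point has the form (x,y,z) with f(x,y,z) = (x+y, −y, −z); i.e., the second and third coordinates are negated and the first is shifted by y under f. -/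
/-- Any period-two point `(x,y,z)` of `f` that is not a fixed point satisfies
`f(x,y,z) = (x+y, −y, −z)`. -/
theorem henonMap_period_two_form (a b c ε μ : ℝ) (x y z : ℝ)
    (h2 : henonMap a b c ε μ (henonMap a b c ε μ (x, y, z)) = (x, y, z))
    (hnf : henonMap a b c ε μ (x, y, z) ≠ (x, y, z)) :
    henonMap a b c ε μ (x, y, z) = (x + y, -y, -z) := by
  have key : ∀ u v w : ℝ, ∃ Q : ℝ,
      henonMap a b c ε μ (u, v, w) = (u + v, v + w + Q, w + Q) := by
    intro u v w
    refine ⟨-ε + μ * v + (a * u ^ 2 + b * u * v + c * v ^ 2), ?_⟩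
    simp only [henonMap, Prod.mk.injEq]
    exact ⟨trivial, by ring, by ring⟩
  obtain ⟨Q, hQ⟩ := key x y z
  rw [hQ] at h2 ⊢
  obtain ⟨Q1, hQ1⟩ := key (x + y) (y + z + Q) (z + Q)
  rw [hQ1] at h2
  rw [Prod.ext_iff, Prod.ext_iff] at h2 ⊢
  obtain ⟨e1, e2, e3⟩ := h2
  simp only at e1 e2 e3 ⊢
  exact ⟨trivial, by linarith, by linarith⟩
end
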